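/- arXiv:1908.01215 — 2 statements merged into one kernel-verified Lean document; each statement's English description precedes it below -/
import Mathlib

section
/- Let B be a bicategory, W a class of 1-morphisms satisfying [WB1]–[WB5], w : A → B in W and f : C → B arbitrary. Given two squares with invertible 2-cells α₁ : w ∘ g₁ ⇒ f ∘ v₁ and α₂ : w ∘ g₂ ⇒ f ∘ v₂ (with g_i : D_i → A, v_i : D_i → C), and a morphism u : C → X in W such that u, u∘v₁ and u∘v₂ all lie in W, there exist 1-morphisms s₁ : E → D₁, s₂ : E → D₂ and invertible 2-cells β : v₁ ∘ s₁ ⇒ v₂ ∘ s₂ and γ : g₁ ∘ s₁ ⇒ g₂ ∘ s₂ such that u ∘ v₁ ∘ s₁ ∈ W and (f ∘ β) · (α₁ ∘ s₁) = (α₂ ∘ s₂) · (w ∘ γ). -/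
/-!
Refine the two squares until their `v`-legs agree up to an invertible 2-cell `β`: a common
refinement of `v₁ ≫ u` and `v₂ ≫ u` by [WB3], followed by a lifting of the resulting 2-cell
along `u`. Pasting `α₁`, `β` and `α₂⁻¹` gives an invertible 2-cell between the `g`-legs
whiskered by `wm`; a lifting `γ` of it along `wm` satisfies the required compatibility by the very
definition of a lifting. Invertible 2-cells have invertible liftings because, by the second half
of [WB4] applied against the trivial lifting, every lifting of an identity becomes an identity
after a suitable restriction. After each step [WB2] restores membership of the composite with `u`
in `W`.
-/

open CategoryTheory Bicategory

universe w v u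

/-- A class of 1-morphisms in a bicategory. -/
def WClass (B : Type u) [Bicategory.{w, v} B] :=
  ∀ ⦃a b : B⦄, (a ⟶ b) → Prop

namespace WClass

variable {B : Type u} [Bicategory.{w, v} B]

/-- [WB1]: all identities are in `W`. -/
def WB1 (W : WClass B) : Prop := ∀ a : B, W (𝟙 a)

/-- [WB2]: for composable arrows of `W` there is a pre-composition landing in `W`. -/
def WB2 (W : WClass B) : Prop :=
  ∀ ⦃a b c : B⦄ (vm : a ⟶ b) (wm : b ⟶ c), W vm → W wm →
    ∃ (a' : B) (u : a' ⟶ a), W (u ≫ vm ≫ wm)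

/-- [WB3]: squares with invertible fillers over cospans with one leg in `W`. -/
def WB3 (W : WClass B) : Prop :=
  ∀ ⦃a b c : B⦄ (wm : a ⟶ b) (f : c ⟶ b), W wm →
    ∃ (d : B) (h : d ⟶ a) (vm : d ⟶ c), W vm ∧ Nonempty (h ≫ wm ≅ vm ≫ f)

/-- `β` is a lifting of the 2-cell `η : f ≫ wm ⟶ g ≫ wm` along `wm`, via `u`. -/
def IsLift ⦃a b c : B⦄ (f g : a ⟶ b) (wm : b ⟶ c) (η : f ≫ wm ⟶ g ≫ wm)
    ⦃a' : B⦄ (u : a' ⟶ a) (β : u ≫ f ⟶ u ≫ g) : Prop :=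
  β ▷ wm = (α_ u f wm).hom ≫ u ◁ η ≫ (α_ u g wm).inv

/-- [WB4]: existence of liftings of 2-cells along arrows of `W`, together with
the compatibility of any two such liftings. -/
def WB4 (W : WClass B) : Prop :=
  (∀ ⦃a b c : B⦄ (f g : a ⟶ b) (wm : b ⟶ c), W wm → ∀ η : f ≫ wm ⟶ g ≫ wm,
    ∃ (a' : B) (u : a' ⟶ a), W u ∧ ∃ β : u ≫ f ⟶ u ≫ g, IsLift f g wm η u β) ∧
  (∀ ⦃a b c : B⦄ (f g : a ⟶ b) (wm : b ⟶ c), W wm → ∀ η : f ≫ wm ⟶ g ≫ wm,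
    ∀ ⦃a₁ : B⦄ (u₁ : a₁ ⟶ a) (β₁ : u₁ ≫ f ⟶ u₁ ≫ g), W u₁ → IsLift f g wm η u₁ β₁ →
      ∀ ⦃a₂ : B⦄ (u₂ : a₂ ⟶ a) (β₂ : u₂ ≫ f ⟶ u₂ ≫ g), W u₂ → IsLift f g wm η u₂ β₂ →
        ∃ (d : B) (s : d ⟶ a₁) (t : d ⟶ a₂), W (s ≫ u₁) ∧ W (t ≫ u₂) ∧
          ∃ e : s ≫ u₁ ≅ t ≫ u₂,
            ((α_ s u₁ f).hom ≫ s ◁ β₁ ≫ (α_ s u₁ g).inv) ≫ e.hom ▷ g =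
              e.hom ▷ f ≫ (α_ t u₂ f).hom ≫ t ◁ β₂ ≫ (α_ t u₂ g).inv)

/-- [WB5]: `W` is closed under invertible 2-cells. -/
def WB5 (W : WClass B) : Prop :=
  ∀ ⦃a b : B⦄ (vm wm : a ⟶ b), W wm → Nonempty (vm ≅ wm) → W vm

end WClass

namespace CategoryTheory.Bicategory

variable {B : Type u} [Bicategory.{w, v} B]

section whiskerLeftAssoc

variable {a b₁ b₂ c d : B} (r : d ⟶ a) {h₁ : a ⟶ b₁} {k₁ : b₁ ⟶ c} {h₂ : a ⟶ b₂} {k₂ : b₂ ⟶ c}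

def whiskerLeftAssoc (β : h₁ ≫ k₁ ⟶ h₂ ≫ k₂) : (r ≫ h₁) ≫ k₁ ⟶ (r ≫ h₂) ≫ k₂ :=
  (α_ r h₁ k₁).hom ≫ r ◁ β ≫ (α_ r h₂ k₂).inv

def whiskerLeftAssocIso (β : h₁ ≫ k₁ ≅ h₂ ≫ k₂) : (r ≫ h₁) ≫ k₁ ≅ (r ≫ h₂) ≫ k₂ :=
  α_ r h₁ k₁ ≪≫ whiskerLeftIso r β ≪≫ (α_ r h₂ k₂).symm

@[simp]
theorem whiskerLeftAssocIso_hom (β : h₁ ≫ k₁ ≅ h₂ ≫ k₂) :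
    (whiskerLeftAssocIso r β).hom = whiskerLeftAssoc r β.hom :=
  rfl

@[simp]
theorem whiskerLeftAssoc_comp {b₃ : B} {h₃ : a ⟶ b₃} {k₃ : b₃ ⟶ c}
    (β : h₁ ≫ k₁ ⟶ h₂ ≫ k₂) (β' : h₂ ≫ k₂ ⟶ h₃ ≫ k₃) :
    whiskerLeftAssoc r (β ≫ β') = whiskerLeftAssoc r β ≫ whiskerLeftAssoc r β' := by
  simp [whiskerLeftAssoc]

@[simp]
theorem whiskerLeftAssoc_id : whiskerLeftAssoc r (𝟙 (h₁ ≫ k₁)) = 𝟙 _ := by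
  simp [whiskerLeftAssoc]

end whiskerLeftAssoc

section pasting

variable {D₁ D₂ A' B' C' E F : B} {wm : A' ⟶ B'} {f : C' ⟶ B'}
  {g₁ : D₁ ⟶ A'} {v₁ : D₁ ⟶ C'} {g₂ : D₂ ⟶ A'} {v₂ : D₂ ⟶ C'}
  (α₁ : g₁ ≫ wm ≅ v₁ ≫ f) (α₂ : g₂ ≫ wm ≅ v₂ ≫ f) {s₁ : E ⟶ D₁} {s₂ : E ⟶ D₂}

def pastingIso (β : s₁ ≫ v₁ ≅ s₂ ≫ v₂) : (s₁ ≫ g₁) ≫ wm ≅ (s₂ ≫ g₂) ≫ wm :=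
  whiskerLeftAssocIso s₁ α₁ ≪≫ whiskerRightIso β f ≪≫ (whiskerLeftAssocIso s₂ α₂).symm

theorem whiskerRight_eq_pastingIso_whiskerLeftAssocIso (β : s₁ ≫ v₁ ≅ s₂ ≫ v₂) (r : F ⟶ E)
    {γ : r ≫ (s₁ ≫ g₁) ⟶ r ≫ (s₂ ≫ g₂)}
    (hγ : γ ▷ wm = whiskerLeftAssoc r (pastingIso α₁ α₂ β).hom) :
    ((α_ r s₁ g₁).hom ≫ γ ≫ (α_ r s₂ g₂).inv) ▷ wm =
      (pastingIso α₁ α₂ (whiskerLeftAssocIso r β)).hom := by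
  rw [comp_whiskerRight, comp_whiskerRight, hγ]
  simp only [pastingIso, whiskerLeftAssocIso, whiskerLeftAssoc, Iso.trans_hom, Iso.symm_hom,
    Iso.trans_inv, Iso.symm_inv, whiskerLeftIso_hom, whiskerLeftIso_inv, whiskerRightIso_hom]
  bicategory

theorem eq_of_whiskerRight_eq_pastingIso (β : s₁ ≫ v₁ ≅ s₂ ≫ v₂) {γ : s₁ ≫ g₁ ⟶ s₂ ≫ g₂}
    (hγ : γ ▷ wm = (pastingIso α₁ α₂ β).hom) :
    (α_ s₁ g₁ wm).hom ≫ s₁ ◁ α₁.hom ≫ (α_ s₁ v₁ f).inv ≫ β.hom ▷ f =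
      γ ▷ wm ≫ (α_ s₂ g₂ wm).hom ≫ s₂ ◁ α₂.hom ≫ (α_ s₂ v₂ f).inv := by
  rw [hγ]
  simp [pastingIso, whiskerLeftAssocIso]

end pasting

end CategoryTheory.Bicategory

namespace WClass

variable {B : Type u} [Bicategory.{w, v} B] {W : WClass B}

section IsLift

variable {a b c a' : B} {f g : a ⟶ b} {wm : b ⟶ c} {η : f ≫ wm ⟶ g ≫ wm}
  {u : a' ⟶ a} {β : u ≫ f ⟶ u ≫ g}

theorem isLift_iff : IsLift f g wm η u β ↔ β ▷ wm = whiskerLeftAssoc u η :=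
  Iff.rfl

theorem IsLift.whiskerLeftAssoc (hβ : IsLift f g wm η u β) {d : B} (r : d ⟶ a') :
    IsLift f g wm η (r ≫ u) (whiskerLeftAssoc r β) := by
  rw [isLift_iff] at *
  rw [Bicategory.whiskerLeftAssoc, comp_whiskerRight, comp_whiskerRight, whisker_assoc, hβ]
  simp only [Bicategory.whiskerLeftAssoc]
  bicategory

theorem IsLift.comp {h : a ⟶ b} {θ : g ≫ wm ⟶ h ≫ wm} {β' : u ≫ g ⟶ u ≫ h}
    (hβ : IsLift f g wm η u β) (hβ' : IsLift g h wm θ u β') :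
    IsLift f h wm (η ≫ θ) u (β ≫ β') := by
  rw [isLift_iff] at *
  rw [comp_whiskerRight, hβ, hβ', whiskerLeftAssoc_comp]

theorem isLift_id (f : a ⟶ b) (wm : b ⟶ c) (u : a' ⟶ a) :
    IsLift f f wm (𝟙 (f ≫ wm)) u (𝟙 (u ≫ f)) := by
  rw [isLift_iff, whiskerLeftAssoc_id, id_whiskerRight]

theorem IsLift.transport (hβ : IsLift f g wm η u β) {u' : a' ⟶ a} (τ : u' ≅ u) :
    IsLift f g wm η u' (τ.hom ▷ f ≫ β ≫ τ.inv ▷ g) := by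
  rw [isLift_iff] at *
  rw [comp_whiskerRight, comp_whiskerRight, hβ]
  simp only [Bicategory.whiskerLeftAssoc, Category.assoc]
  rw [associator_naturality_left_assoc, ← whisker_exchange_assoc,
    associator_inv_naturality_left_assoc]
  simp [← comp_whiskerRight]

end IsLift

theorem exists_comp_mem (h2 : W.WB2) (h5 : W.WB5) {a b c : B} {x : a ⟶ b} {y : b ⟶ c}
    (hx : W x) (hy : W y) : ∃ (a' : B) (p : a' ⟶ a), W ((p ≫ x) ≫ y) := by
  obtain ⟨a', p, hp⟩ := h2 x y hx hy
  exact ⟨a', p, h5 _ _ hp ⟨α_ p x y⟩⟩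

theorem exists_iso_comp_mem (h2 : W.WB2) (h3 : W.WB3) (h5 : W.WB5) {a b c : B}
    {x : a ⟶ c} {y : b ⟶ c} (hx : W x) (hy : W y) :
    ∃ (d : B) (p : d ⟶ a) (q : d ⟶ b), W (p ≫ x) ∧ Nonempty (p ≫ x ≅ q ≫ y) := by
  obtain ⟨d, h, k, hk, ⟨e⟩⟩ := h3 y x hy
  obtain ⟨d', p, hp⟩ := exists_comp_mem h2 h5 hk hx
  exact ⟨d', p ≫ k, p ≫ h, hp, ⟨α_ p k x ≪≫ whiskerLeftIso p e.symm ≪≫ (α_ p h y).symm⟩⟩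

theorem exists_isLift_isLift (h2 : W.WB2) (h3 : W.WB3) (h4 : W.WB4) (h5 : W.WB5)
    {a b c : B} {f g f' g' : a ⟶ b} {wm : b ⟶ c} (hwm : W wm)
    (η : f ≫ wm ⟶ g ≫ wm) (θ : f' ≫ wm ⟶ g' ≫ wm) :
    ∃ (a' : B) (v : a' ⟶ a) (β : v ≫ f ⟶ v ≫ g) (β' : v ≫ f' ⟶ v ≫ g'),
      W v ∧ IsLift f g wm η v β ∧ IsLift f' g' wm θ v β' := by
  obtain ⟨a₁, u₁, hu₁, β₁, hβ₁⟩ := h4.1 f g wm hwm η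
  obtain ⟨a₂, u₂, hu₂, β₂, hβ₂⟩ := h4.1 f' g' wm hwm θ
  obtain ⟨d, p, q, hp, ⟨τ⟩⟩ := exists_iso_comp_mem h2 h3 h5 hu₁ hu₂
  exact ⟨d, p ≫ u₁, _, _, hp, hβ₁.whiskerLeftAssoc p, (hβ₂.whiskerLeftAssoc q).transport τ⟩

theorem exists_whiskerLeftAssoc_eq_id (h4 : W.WB4) {a b c a' : B} {f : a ⟶ b} {wm : b ⟶ c}
    (hwm : W wm) {v : a' ⟶ a} (hv : W v) {γ : v ≫ f ⟶ v ≫ f}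
    (hγ : IsLift f f wm (𝟙 _) v γ) :
    ∃ (d : B) (s : d ⟶ a'), W (s ≫ v) ∧ whiskerLeftAssoc s γ = 𝟙 _ := by
  obtain ⟨d, s, t, hs, -, e, he⟩ := h4.2 f f wm hwm (𝟙 _) v γ hv hγ v (𝟙 _) hv (isLift_id f wm v)
  refine ⟨d, s, hs, (cancel_mono (e.hom ▷ f)).1 ?_⟩
  change whiskerLeftAssoc s γ ≫ _ = _ ≫ whiskerLeftAssoc t (𝟙 _) at he
  rw [he, whiskerLeftAssoc_id, Category.comp_id, Category.id_comp]

theorem exists_isoLift (h2 : W.WB2) (h3 : W.WB3) (h4 : W.WB4) (h5 : W.WB5)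
    {a b c : B} {f g : a ⟶ b} {wm : b ⟶ c} (hwm : W wm) (η : f ≫ wm ≅ g ≫ wm) :
    ∃ (a' : B) (u : a' ⟶ a) (β : u ≫ f ≅ u ≫ g), W u ∧ IsLift f g wm η.hom u β.hom := by
  obtain ⟨a₁, v, β, β', hv, hβ, hβ'⟩ := exists_isLift_isLift h2 h3 h4 h5 hwm η.hom η.inv
  obtain ⟨d₁, s₁, hs₁, hinv₁⟩ := exists_whiskerLeftAssoc_eq_id h4 hwm hv
    (by simpa using hβ.comp hβ')
  obtain ⟨d₂, s₂, hs₂, hinv₂⟩ := exists_whiskerLeftAssoc_eq_id h4 hwm hs₁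
    (by simpa using (hβ'.comp hβ).whiskerLeftAssoc s₁)
  refine ⟨d₂, s₂ ≫ s₁ ≫ v,
    ⟨whiskerLeftAssoc s₂ (whiskerLeftAssoc s₁ β), whiskerLeftAssoc s₂ (whiskerLeftAssoc s₁ β'),
      ?_, ?_⟩, hs₂, (hβ.whiskerLeftAssoc s₁).whiskerLeftAssoc s₂⟩
  · rw [← whiskerLeftAssoc_comp, ← whiskerLeftAssoc_comp, hinv₁, whiskerLeftAssoc_id]
  · simpa using hinv₂

theorem exists_isoLift_comp_mem (h2 : W.WB2) (h3 : W.WB3) (h4 : W.WB4) (h5 : W.WB5)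
    {a b c x : B} {f g : a ⟶ b} {wm : b ⟶ c} (hwm : W wm) (η : f ≫ wm ≅ g ≫ wm)
    {y : a ⟶ x} (hy : W y) :
    ∃ (a' : B) (u : a' ⟶ a) (β : u ≫ f ≅ u ≫ g), W (u ≫ y) ∧ IsLift f g wm η.hom u β.hom := by
  obtain ⟨a₁, u, β, hu, hβ⟩ := exists_isoLift h2 h3 h4 h5 hwm η
  obtain ⟨a₂, p, hp⟩ := exists_comp_mem h2 h5 hu hy
  exact ⟨a₂, p ≫ u, whiskerLeftAssocIso p β, hp, hβ.whiskerLeftAssoc p⟩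

end WClass

theorem statement4_general {B : Type u} [Bicategory.{w, v} B] (W : WClass B)
    (h2 : W.WB2) (h3 : W.WB3) (h4 : W.WB4) (h5 : W.WB5)
    {A' B' C' X D₁ D₂ : B} (wm : A' ⟶ B') (hwm : W wm) (f : C' ⟶ B')
    (g₁ : D₁ ⟶ A') (v₁ : D₁ ⟶ C') (g₂ : D₂ ⟶ A') (v₂ : D₂ ⟶ C')
    (α₁ : g₁ ≫ wm ≅ v₁ ≫ f) (α₂ : g₂ ≫ wm ≅ v₂ ≫ f)
    (u : C' ⟶ X) (hu : W u) (hu₁ : W (v₁ ≫ u)) (hu₂ : W (v₂ ≫ u)) :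
    ∃ (E : B) (s₁ : E ⟶ D₁) (s₂ : E ⟶ D₂)
      (β : s₁ ≫ v₁ ≅ s₂ ≫ v₂) (γ : s₁ ≫ g₁ ≅ s₂ ≫ g₂),
      W ((s₁ ≫ v₁) ≫ u) ∧
        (α_ s₁ g₁ wm).hom ≫ s₁ ◁ α₁.hom ≫ (α_ s₁ v₁ f).inv ≫ β.hom ▷ f =
          γ.hom ▷ wm ≫ (α_ s₂ g₂ wm).hom ≫ s₂ ◁ α₂.hom ≫ (α_ s₂ v₂ f).inv := by
  obtain ⟨P, t₁, t₂, ht, ⟨σ⟩⟩ := WClass.exists_iso_comp_mem h2 h3 h5 hu₁ hu₂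
  obtain ⟨Q, q, β₀, hq, -⟩ := WClass.exists_isoLift_comp_mem h2 h3 h4 h5 hu
    (α_ t₁ v₁ u ≪≫ σ ≪≫ (α_ t₂ v₂ u).symm) ht
  let β : (q ≫ t₁) ≫ v₁ ≅ (q ≫ t₂) ≫ v₂ := α_ q t₁ v₁ ≪≫ β₀ ≪≫ (α_ q t₂ v₂).symm
  obtain ⟨E, r, γ, hr, hγ⟩ :=
    WClass.exists_isoLift_comp_mem h2 h3 h4 h5 hwm (pastingIso α₁ α₂ β) hq
  refine ⟨E, r ≫ q ≫ t₁, r ≫ q ≫ t₂, whiskerLeftAssocIso r β,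
    α_ r _ g₁ ≪≫ γ ≪≫ (α_ r _ g₂).symm,
    h5 _ _ hr ⟨α_ _ _ _ ≪≫ α_ _ _ _ ≪≫ whiskerLeftIso r (α_ _ _ _)⟩, ?_⟩
  exact eq_of_whiskerRight_eq_pastingIso α₁ α₂ _
    (whiskerRight_eq_pastingIso_whiskerLeftAssocIso α₁ α₂ β r hγ)

theorem statement4 {B : Type u} [Bicategory.{w, v} B] (W : WClass B)
    (h1 : W.WB1) (h2 : W.WB2) (h3 : W.WB3) (h4 : W.WB4) (h5 : W.WB5)
    {A' B' C' X D₁ D₂ : B} (wm : A' ⟶ B') (hwm : W wm) (f : C' ⟶ B')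
    (g₁ : D₁ ⟶ A') (v₁ : D₁ ⟶ C') (g₂ : D₂ ⟶ A') (v₂ : D₂ ⟶ C')
    (α₁ : g₁ ≫ wm ≅ v₁ ≫ f) (α₂ : g₂ ≫ wm ≅ v₂ ≫ f)
    (u : C' ⟶ X) (hu : W u) (hu₁ : W (v₁ ≫ u)) (hu₂ : W (v₂ ≫ u)) :
    ∃ (E : B) (s₁ : E ⟶ D₁) (s₂ : E ⟶ D₂)
      (β : s₁ ≫ v₁ ≅ s₂ ≫ v₂) (γ : s₁ ≫ g₁ ≅ s₂ ≫ g₂),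
      W ((s₁ ≫ v₁) ≫ u) ∧
        (α_ s₁ g₁ wm).hom ≫ s₁ ◁ α₁.hom ≫ (α_ s₁ v₁ f).inv ≫ β.hom ▷ f =
          γ.hom ▷ wm ≫ (α_ s₂ g₂ wm).hom ≫ s₂ ◁ α₂.hom ≫ (α_ s₂ v₂ f).inv :=
  statement4_general W h2 h3 h4 h5 wm hwm f g₁ v₁ g₂ v₂ α₁ α₂ u hu hu₁ hu₂
end

section
/- Let B be a bicategory with a class V of 1-morphisms satisfying [WB1]–[WB5], and let W ⊆ V be weakly initial in V (for each v ∈ V there exists u with v ∘ u ∈ W) and satisfy [WB1] and [WB5]. Then W also satisfies conditions [WB2], [WB3], and [WB4]. -/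
open CategoryTheory Bicategory

universe w v u

/-!
Everything [WB2]–[WB4] asks for in `W` is first produced in `V`, then moved into `W` by
precomposing with the 1-cell that weak initiality provides; [WB5] absorbs the associator
needed to rebracket. Liftings of 2-cells, and the compatibility of two liftings, survive
such a precomposition by naturality of the associator and of whiskering.
-/

namespace WClass

variable {B : Type u} [Bicategory.{w, v} B]

def WeaklyInitial (W V : WClass B) : Prop :=
  ∀ ⦃a b : B⦄ (f : a ⟶ b), V f → ∃ (c : B) (u : c ⟶ a), W (u ≫ f)

section Precomp

variable {a b c d e : B} {u : a ⟶ b} {f g : b ⟶ c}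

/-- The 2-cells compared in the compatibility clause of [WB4] are `precomp s β₁` and
`precomp t β₂`. -/
def precomp (s : d ⟶ a) (β : u ≫ f ⟶ u ≫ g) : (s ≫ u) ≫ f ⟶ (s ≫ u) ≫ g :=
  (α_ s u f).hom ≫ s ◁ β ≫ (α_ s u g).inv

theorem precomp_comp (r : e ⟶ d) (s : d ⟶ a) (β : u ≫ f ⟶ u ≫ g) :
    precomp (r ≫ s) β =
      (α_ r s u).hom ▷ f ≫ precomp r (precomp s β) ≫ (α_ r s u).inv ▷ g := by
  simp only [precomp]
  bicategory

theorem precomp_naturality (s : d ⟶ a) {u' : a ⟶ b} {θ : u ⟶ u'}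
    {β : u ≫ f ⟶ u ≫ g} {β' : u' ≫ f ⟶ u' ≫ g} (h : β ≫ θ ▷ g = θ ▷ f ≫ β') :
    precomp s β ≫ (s ◁ θ) ▷ g = (s ◁ θ) ▷ f ≫ precomp s β' := by
  simp only [precomp, whisker_assoc, Category.assoc, Iso.inv_hom_id_assoc,
    ← whiskerLeft_comp_assoc, h]

theorem IsLift.precomp {k : B} {x : c ⟶ k} {η : f ≫ x ⟶ g ≫ x} {β : u ≫ f ⟶ u ≫ g}
    (hβ : IsLift f g x η u β) (s : d ⟶ a) : IsLift f g x η (s ≫ u) (WClass.precomp s β) := by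
  unfold IsLift at hβ ⊢
  rw [WClass.precomp, comp_whiskerRight, comp_whiskerRight, whisker_assoc, hβ]
  bicategory

theorem exists_compatible_precomp {a₁ a₂ : B} (r : e ⟶ d) {s : d ⟶ a₁} {t : d ⟶ a₂}
    {u₁ : a₁ ⟶ b} {u₂ : a₂ ⟶ b} {β₁ : u₁ ≫ f ⟶ u₁ ≫ g} {β₂ : u₂ ≫ f ⟶ u₂ ≫ g}
    (φ : s ≫ u₁ ≅ t ≫ u₂) (h : precomp s β₁ ≫ φ.hom ▷ g = φ.hom ▷ f ≫ precomp t β₂) :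
    ∃ φ' : (r ≫ s) ≫ u₁ ≅ (r ≫ t) ≫ u₂,
      precomp (r ≫ s) β₁ ≫ φ'.hom ▷ g = φ'.hom ▷ f ≫ precomp (r ≫ t) β₂ := by
  refine ⟨α_ r s u₁ ≪≫ whiskerLeftIso r φ ≪≫ (α_ r t u₂).symm, ?_⟩
  simp only [precomp_comp, Iso.trans_hom, Iso.symm_hom, whiskerLeftIso_hom, comp_whiskerRight,
    Category.assoc, inv_hom_whiskerRight_assoc, reassoc_of% (precomp_naturality r h)]

end Precomp

section WeaklyInitial

variable {V W : WClass B}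

theorem WeaklyInitial.exists_comp_assoc (hwi : W.WeaklyInitial V) (hW5 : W.WB5) {a b c : B}
    {x : a ⟶ b} {y : b ⟶ c} (h : V (x ≫ y)) : ∃ (d : B) (r : d ⟶ a), W ((r ≫ x) ≫ y) := by
  obtain ⟨d, r, hr⟩ := hwi _ h
  exact ⟨d, r, hW5 _ _ hr ⟨α_ r x y⟩⟩

theorem WB2.of_weaklyInitial (hV2 : V.WB2) (hsub : ∀ ⦃a b : B⦄ (f : a ⟶ b), W f → V f)
    (hwi : W.WeaklyInitial V) (hW5 : W.WB5) : W.WB2 := by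
  intro a b c x y hx hy
  obtain ⟨a', u, hu⟩ := hV2 x y (hsub _ hx) (hsub _ hy)
  obtain ⟨a'', r, hr⟩ := hwi.exists_comp_assoc hW5 hu
  exact ⟨a'', r ≫ u, hr⟩

theorem WB3.of_weaklyInitial (hV3 : V.WB3) (hsub : ∀ ⦃a b : B⦄ (f : a ⟶ b), W f → V f)
    (hwi : W.WeaklyInitial V) : W.WB3 := by
  intro a b c x f hx
  obtain ⟨d, h, v, hv, ⟨φ⟩⟩ := hV3 x f (hsub _ hx)
  obtain ⟨d', r, hr⟩ := hwi _ hv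
  exact ⟨d', r ≫ h, r ≫ v, hr, ⟨α_ r h x ≪≫ whiskerLeftIso r φ ≪≫ (α_ r v f).symm⟩⟩

theorem WB4.of_weaklyInitial (hV4 : V.WB4) (hsub : ∀ ⦃a b : B⦄ (f : a ⟶ b), W f → V f)
    (hwi : W.WeaklyInitial V) (hW5 : W.WB5) : W.WB4 := by
  constructor
  · intro a b c f g x hx η
    obtain ⟨a', u, hu, β, hβ⟩ := hV4.1 f g x (hsub _ hx) η
    obtain ⟨a'', r, hr⟩ := hwi _ hu
    exact ⟨a'', r ≫ u, hr, precomp r β, hβ.precomp r⟩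
  · intro a b c f g x hx η a₁ u₁ β₁ hu₁ hβ₁ a₂ u₂ β₂ hu₂ hβ₂
    obtain ⟨d, s, t, hs, -, φ, hφ⟩ :=
      hV4.2 f g x (hsub _ hx) η u₁ β₁ (hsub _ hu₁) hβ₁ u₂ β₂ (hsub _ hu₂) hβ₂
    obtain ⟨d', r, hr⟩ := hwi.exists_comp_assoc hW5 hs
    obtain ⟨φ', hφ'⟩ := exists_compatible_precomp r φ hφ
    exact ⟨d', r ≫ s, r ≫ t, hr, hW5 _ _ hr ⟨φ'.symm⟩, φ', hφ'⟩

end WeaklyInitial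

end WClass

theorem statement5_general {B : Type u} [Bicategory.{w, v} B] (V W : WClass B)
    (hV2 : V.WB2) (hV3 : V.WB3) (hV4 : V.WB4)
    (hsub : ∀ ⦃a b : B⦄ (f : a ⟶ b), W f → V f)
    (hwi : ∀ ⦃a b : B⦄ (f : a ⟶ b), V f → ∃ (c : B) (u : c ⟶ a), W (u ≫ f))
    (hW5 : W.WB5) :
    W.WB2 ∧ W.WB3 ∧ W.WB4 :=
  ⟨.of_weaklyInitial hV2 hsub hwi hW5, .of_weaklyInitial hV3 hsub hwi,
    .of_weaklyInitial hV4 hsub hwi hW5⟩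

theorem statement5 {B : Type u} [Bicategory.{w, v} B] (V W : WClass B)
    (hV1 : V.WB1) (hV2 : V.WB2) (hV3 : V.WB3) (hV4 : V.WB4) (hV5 : V.WB5)
    (hsub : ∀ ⦃a b : B⦄ (f : a ⟶ b), W f → V f)
    (hwi : ∀ ⦃a b : B⦄ (f : a ⟶ b), V f → ∃ (c : B) (u : c ⟶ a), W (u ≫ f))
    (hW1 : W.WB1) (hW5 : W.WB5) :
    W.WB2 ∧ W.WB3 ∧ W.WB4 :=
  statement5_general V W hV2 hV3 hV4 hsub hwi hW5
end
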